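/- Let β ∈ Π_aff^{re,+} be an affine positive real root with β < c. If β_1, …, β_r ∈ Π_aff^{re,+} satisfy Σ_{i=1}^{r} β_i ≤ β, then the ordinary product of reflections satisfies s_{β_1} s_{β_2} ⋯ s_{β_r} ≤ s_β in the Bruhat order on W_aff. -/

import Mathlib

open scoped BigOperators

namespace AffA

/-- Elements `⟨w, λ⟩` representing `w · t_λ` in the affine Weyl group
`W_aff = W ⋉ Q∨` of type `A_{n-1}^{(1)}`; the translation part `λ` is recorded
in `ε`-coordinates. -/
@[ext]
structure Aff (n : ℕ) where
  w : Equiv.Perm (Fin n)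
  t : Fin n → ℤ

namespace Aff

variable {n : ℕ}

instance : Nonempty (Aff n) := ⟨⟨1, 0⟩⟩

/-- multiplication: `(w t_λ)(v t_μ) = (wv) t_{v⁻¹λ + μ}`. -/
def mul' (x y : Aff n) : Aff n := ⟨x.w * y.w, fun i => x.t (y.w i) + y.t i⟩

def inv' (x : Aff n) : Aff n := ⟨x.w⁻¹, fun i => - x.t (x.w⁻¹ i)⟩

instance : Group (Aff n) where
  mul := mul'
  one := ⟨1, 0⟩
  inv := inv'
  mul_assoc a b c := by
    show mul' (mul' a b) c = mul' a (mul' b c)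
    simp only [mul', Aff.mk.injEq]
    refine ⟨mul_assoc _ _ _, funext fun i => ?_⟩
    simp [Equiv.Perm.mul_apply, add_assoc]
  one_mul a := by
    obtain ⟨aw, av⟩ := a
    show mul' ⟨1, 0⟩ ⟨aw, av⟩ = ⟨aw, av⟩
    simp only [mul', Aff.mk.injEq]
    exact ⟨one_mul _, funext fun i => by simp⟩
  mul_one a := by
    obtain ⟨aw, av⟩ := a
    show mul' ⟨aw, av⟩ ⟨1, 0⟩ = ⟨aw, av⟩
    simp only [mul', Aff.mk.injEq]
    exact ⟨mul_one _, funext fun i => by simp⟩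
  inv_mul_cancel a := by
    obtain ⟨aw, av⟩ := a
    show mul' (inv' ⟨aw, av⟩) ⟨aw, av⟩ = ⟨1, 0⟩
    simp only [mul', inv', Aff.mk.injEq]
    exact ⟨inv_mul_cancel _, funext fun i => by simp⟩

/-- cyclic successor on the vertices `α_0, …, α_{n-1}` of the affine Dynkin diagram. -/
def fsucc (i : Fin n) : Fin n :=
  ⟨(i.val + 1) % n, Nat.mod_lt _ (Nat.lt_of_le_of_lt (Nat.zero_le _) i.isLt)⟩

/-- the coefficient of `α_0`. -/
def coeff0 (a : Fin n → ℤ) : ℤ := if h : 0 < n then a ⟨0, h⟩ else 0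

/-- the `ε`-coordinates of the finite part of an element of the affine root
lattice written in the coordinates of the simple roots `α_0, …, α_{n-1}`
(`δ` is sent to `0`). -/
def finPart (a : Fin n → ℤ) : Fin n → ℤ := fun i => a (fsucc i) - a i

/-- `c = δ = α_0 + α_1 + ⋯ + α_{n-1}`, in simple root coordinates. -/
def cvec (n : ℕ) : Fin n → ℤ := fun _ => 1

/-- the affine Cartan matrix of type `A_{n-1}^{(1)}` (for `n ≥ 3`). -/
def cartan (i j : Fin n) : ℤ :=
  if i = j then 2 else if j = fsucc i ∨ i = fsucc j then -1 else 0

/-- the natural pairing `⟨a, b∨⟩` of elements of the affine root lattice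
(simple root coordinates). -/
def pairing (a b : Fin n → ℤ) : ℤ := ∑ i : Fin n, ∑ j : Fin n, a i * cartan i j * b j

/-- real roots of the affine root system: lattice vectors of norm `2`. -/
def IsRealRoot (a : Fin n → ℤ) : Prop := pairing a a = 2

/-- affine positive real roots: real roots with nonnegative coordinates. -/
def IsPosRoot (a : Fin n → ℤ) : Prop := IsRealRoot a ∧ ∀ i, 0 ≤ a i

/-- perpendicularity of affine roots. -/
def Perp (a b : Fin n → ℤ) : Prop := pairing a b = 0

/-- the support of an affine root. -/
def supp (a : Fin n → ℤ) : Finset (Fin n) := Finset.univ.filter fun i => a i ≠ 0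

/-- the supports of `a` and `b` are disconnected in the affine Dynkin diagram
(a cycle on `α_0, …, α_{n-1}`): no vertex of one is equal or adjacent to a
vertex of the other. -/
def Disconn (a b : Fin n → ℤ) : Prop :=
  ∀ i j : Fin n, a i ≠ 0 → b j ≠ 0 → i ≠ j ∧ j ≠ fsucc i ∧ i ≠ fsucc j

/-- for roots `a, b < c` (0–1 vectors), `a ∩ b = Σ_{α_i ∈ supp a ∩ supp b} α_i`. -/
def inter (a b : Fin n → ℤ) : Fin n → ℤ :=
  fun i => if a i ≠ 0 ∧ b i ≠ 0 then 1 else 0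

instance : Nonempty (Equiv.Perm (Fin n)) := ⟨1⟩

/-- the reflection `s_β = s_α t_{mα}` associated to the real root `β = α + mδ`
(given in simple root coordinates). -/
noncomputable def sref (a : Fin n → ℤ) : Aff n :=
  ⟨Classical.epsilon fun w : Equiv.Perm (Fin n) => ∃ p q : Fin n,
      finPart a = Pi.single p 1 - Pi.single q 1 ∧ w = Equiv.swap p q,
    fun i => coeff0 a * finPart a i⟩

/-- the simple reflections `s_0, …, s_{n-1}`. -/
noncomputable def simple (i : Fin n) : Aff n := sref (Pi.single i 1)

/-- the Coxeter length, via the Iwahori–Matsumoto formula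
`ℓ(w t_λ) = Σ_{γ ∈ Π⁺} |χ(w·γ < 0) + ⟨λ, γ⟩|`. -/
def len (x : Aff n) : ℕ :=
  ∑ p : Fin n, ∑ q : Fin n,
    if p < q then ((if x.w q < x.w p then (1 : ℤ) else 0) + (x.t p - x.t q)).natAbs else 0

/-- translation `t_v` by an element `v` of the (co)root lattice given in
`ε`-coordinates. -/
def trE (v : Fin n → ℤ) : Aff n := ⟨1, v⟩

/-- a Bruhat step: an edge of the moment graph which increases the length. -/
def bstep (u v : Aff n) : Prop :=
  (∃ a, IsPosRoot a ∧ v = u * sref a) ∧ len u < len v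

/-- the Bruhat order: `u ≤ v` iff there is an increasing chain from `u` to `v`
in the moment graph. -/
def ble (u v : Aff n) : Prop := Relation.ReflTransGen bstep u v

/-- there is a chain in the moment graph from `u` to `v` of total degree `≤ d`. -/
def ChainTo (d : Fin n → ℤ) (u v : Aff n) : Prop :=
  ∃ l : List (Fin n → ℤ),
    (∀ b ∈ l, IsPosRoot b) ∧ l.sum ≤ d ∧ v = u * (l.map sref).prod

/-- the set of elements reachable from some `u' ≤ u` by a chain of degree `≤ d`. -/
def nbhdSet (d : Fin n → ℤ) (u : Aff n) : Set (Aff n) :=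
  {v | ∃ u', ble u' u ∧ ChainTo d u' v}

/-- the combinatorial curve neighborhood `Γ_d(u)`: the Bruhat-maximal elements
among those reachable from some `u' ≤ u` by a chain of degree `≤ d`. -/
def curveNbhd (d : Fin n → ℤ) (u : Aff n) : Set (Aff n) :=
  {v | v ∈ nbhdSet d u ∧ ∀ x ∈ nbhdSet d u, ble v x → x = v}

/-- one step of the Hecke product. -/
noncomputable def heckeStep (u : Aff n) (i : Fin n) : Aff n :=
  if len u < len (u * simple i) then u * simple i else u

/-- the Hecke product `u · v`: multiply `u` on the right, left to right, by the
letters of a reduced word for `v`. -/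
noncomputable def heckeMul (u v : Aff n) : Aff n :=
  (Classical.epsilon fun l : List (Fin n) =>
      (l.map simple).prod = v ∧ l.length = len v).foldl heckeStep u

/-- the Hecke product `s_{β_1} · s_{β_2} · ⋯ · s_{β_r}` of the reflections of a
list of roots. -/
noncomputable def heckeList (l : List (Fin n → ℤ)) : Aff n :=
  l.foldl (fun u b => heckeMul u (sref b)) 1

/-- the defining recursion for `z_d`: `z_0 = id` and `z_d = s_α · z_{d-α}`
(Hecke product), where `α` is any maximal root with `α ≤ d`. -/
inductive IsZ : (Fin n → ℤ) → Aff n → Prop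
  | zero : IsZ 0 1
  | step {d a : Fin n → ℤ} {x : Aff n} :
      IsPosRoot a → a ≤ d →
      (∀ b, IsPosRoot b → b ≤ d → a ≤ b → b = a) →
      IsZ (d - a) x → IsZ d (heckeMul (sref a) x)

end Aff
end AffA

/-!
Conjugation by the length-zero element `π = c · t_{ε_{n-1}}` (`c` the cyclic rotation of
`Fin n`) of the extended affine Weyl group rotates the affine Dynkin diagram: it preserves the length and sends `s_α` to the
reflection of the rotated root, so it preserves the Bruhat order. As `β < δ`, some coordinate
of `β` vanishes, and after rotating it is the `α_0`-coordinate. Then `β` and every `β_i ≤ β`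
are roots of the finite root system, so `s_β` is a transposition `(P Q)` and
`s_{β_1} ⋯ s_{β_r}` is a permutation `σ`.

For a permutation `σ` and a cut `i` (between `i - 1` and `i`) let `crossing σ i` count the points
that `σ` moves from below the cut to above it. It is subadditive, and for the transposition
`(p q)` it is the `α_i`-coefficient of the root `ε_p - ε_q`. Hence `Σ β_i ≤ β` gives
`crossing σ ≤ crossing (P Q)`. Any such `σ` is below `(P Q)`: unless `σ = (P Q)`, there is a
transposition `(a b)` with `ℓ(σ (a b)) > ℓ(σ)` such that `σ (a b)` still satisfies the same bound.
-/

namespace AffA.Aff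

open Finset

variable {n : ℕ}

theorem fsucc_eq_finRotate : (fsucc : Fin n → Fin n) = finRotate n := by
  funext i
  have := i.neZero
  ext
  simp [fsucc, Fin.val_add]

theorem finPart_apply (a : Fin n → ℤ) (i : Fin n) : finPart a i = a (finRotate n i) - a i := by
  rw [finPart, fsucc_eq_finRotate]

theorem finRotate_apply_ne (hn : 2 ≤ n) (i : Fin n) : finRotate n i ≠ i := by
  obtain ⟨m, rfl⟩ := Nat.exists_eq_add_one_of_ne_zero (by omega : n ≠ 0)
  simp only [ne_eq, Fin.ext_iff, coe_finRotate, Fin.val_last]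
  split_ifs <;> omega

theorem finRotate_finRotate_apply_ne (hn : 3 ≤ n) (i : Fin n) :
    finRotate n (finRotate n i) ≠ i := by
  obtain ⟨m, rfl⟩ := Nat.exists_eq_add_one_of_ne_zero (by omega : n ≠ 0)
  simp only [ne_eq, Fin.ext_iff, coe_finRotate, Fin.val_last]
  split_ifs with h₁ h₂ h₂ <;> simp only [h₁] at * <;> omega

theorem cartan_eq (hn : 3 ≤ n) (i j : Fin n) :
    cartan i j = 2 * (if j = i then 1 else 0) - (if j = finRotate n i then 1 else 0)
      - (if finRotate n j = i then 1 else 0) := by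
  have h₁ := finRotate_apply_ne (by omega) i
  have h₂ := finRotate_finRotate_apply_ne hn i
  rw [cartan, fsucc_eq_finRotate]
  split_ifs <;> grind

theorem pairing_self_eq_sum_sq (hn : 3 ≤ n) (a : Fin n → ℤ) :
    pairing a a = ∑ i, finPart a i ^ 2 := by
  have hrow : ∀ i, ∑ j, a i * cartan i j * a j
      = 2 * a i ^ 2 - a i * a (finRotate n i) - a i * a ((finRotate n).symm i) := by
    intro i
    simp only [cartan_eq hn, ← Equiv.eq_symm_apply, mul_sub, sub_mul, sum_sub_distrib, mul_ite,
      ite_mul, sum_ite_eq', mem_univ, if_true, mul_zero, zero_mul, mul_one]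
    ring
  have hsymm : ∑ i, a i * a ((finRotate n).symm i) = ∑ i, a (finRotate n i) * a i := by
    rw [← Equiv.sum_comp (finRotate n)]
    simp only [Equiv.symm_apply_apply]
  have hsq : ∑ i, a (finRotate n i) ^ 2 = ∑ i, a i ^ 2 :=
    Equiv.sum_comp (finRotate n) (fun i => a i ^ 2)
  simp only [pairing, hrow, finPart_apply, sum_sub_distrib, sub_sq, sum_add_distrib, hsymm, hsq,
    ← mul_sum]
  rw [sum_congr rfl fun i _ => mul_comm (a i) _]
  simp only [mul_assoc, ← mul_sum]
  ring

theorem sum_finPart (a : Fin n → ℤ) : ∑ i, finPart a i = 0 := by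
  simp only [finPart_apply, sum_sub_distrib, Equiv.sum_comp (finRotate n) a, sub_self]

theorem exists_eq_single_sub_single {ι : Type*} [Fintype ι] [DecidableEq ι] {f : ι → ℤ}
    (h0 : ∑ i, f i = 0) (h2 : ∑ i, f i ^ 2 = 2) :
    ∃ p q, p ≠ q ∧ f = Pi.single p 1 - Pi.single q 1 := by
  have hval : ∀ i, f i = -1 ∨ f i = 0 ∨ f i = 1 := by
    intro i
    have : f i ^ 2 ≤ 2 := h2 ▸ single_le_sum (fun j _ => sq_nonneg (f j)) (mem_univ i)
    have : -1 ≤ f i ∧ f i ≤ 1 := by constructor <;> nlinarith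
    omega
  have hf : ∀ i, f i = (if f i = 1 then 1 else 0) - (if f i = -1 then 1 else 0) := by
    intro i; rcases hval i with h | h | h <;> simp [h]
  have hsq : ∀ i, f i ^ 2 = (if f i = 1 then 1 else 0) + (if f i = -1 then 1 else 0) := by
    intro i; rcases hval i with h | h | h <;> simp [h]
  rw [sum_congr rfl fun i _ => hf i, sum_sub_distrib] at h0
  rw [sum_congr rfl fun i _ => hsq i, sum_add_distrib] at h2
  simp only [sum_boole] at h0 h2
  obtain ⟨p, hp⟩ := card_eq_one.mp (show #{i | f i = 1} = 1 by omega)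
  obtain ⟨q, hq⟩ := card_eq_one.mp (show #{i | f i = -1} = 1 by omega)
  have hp' : ∀ i, f i = 1 ↔ i = p := fun i => by simpa using congrArg (i ∈ ·) hp
  have hq' : ∀ i, f i = -1 ↔ i = q := fun i => by simpa using congrArg (i ∈ ·) hq
  refine ⟨p, q, fun h => by simpa [h, (hq' q).2 rfl] using (hp' p).2 rfl, funext fun i => ?_⟩
  rw [hf i]
  simp only [hp', hq', Pi.sub_apply, Pi.single_apply]

theorem single_sub_single_inj {ι : Type*} [DecidableEq ι] {p q p' q' : ι} (hpq : p ≠ q)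
    (h : (Pi.single p 1 - Pi.single q 1 : ι → ℤ) = Pi.single p' 1 - Pi.single q' 1) :
    p' = p ∧ q' = q := by
  have hp := congrFun h p
  have hq := congrFun h q
  simp only [Pi.sub_apply, Pi.single_apply] at hp hq
  split_ifs at hp hq <;> simp_all

theorem IsRealRoot.exists_finPart_eq (hn : 3 ≤ n) {a : Fin n → ℤ} (ha : IsRealRoot a) :
    ∃ p q, p ≠ q ∧ finPart a = Pi.single p 1 - Pi.single q 1 :=
  exists_eq_single_sub_single (sum_finPart a) (pairing_self_eq_sum_sq hn a ▸ ha)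

theorem isRealRoot_of_finPart_eq (hn : 3 ≤ n) {a : Fin n → ℤ} {p q : Fin n} (hpq : p ≠ q)
    (h : finPart a = Pi.single p 1 - Pi.single q 1) : IsRealRoot a := by
  rw [IsRealRoot, pairing_self_eq_sum_sq hn, h]
  simp [sq, Pi.single_apply, mul_sub, sum_sub_distrib, hpq, hpq.symm]

theorem sref_eq {a : Fin n → ℤ} {p q : Fin n} (hpq : p ≠ q)
    (h : finPart a = Pi.single p 1 - Pi.single q 1) :
    sref a = ⟨Equiv.swap p q, fun i => coeff0 a * finPart a i⟩ := by
  have hw : (fun w : Equiv.Perm (Fin n) => ∃ p' q' : Fin n,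
      finPart a = Pi.single p' 1 - Pi.single q' 1 ∧ w = Equiv.swap p' q')
      = (· = Equiv.swap p q) := by
    funext w
    apply propext
    constructor
    · rintro ⟨p', q', h', rfl⟩
      obtain ⟨rfl, rfl⟩ := single_sub_single_inj hpq (h.symm.trans h')
      rfl
    · rintro rfl
      exact ⟨p, q, h, rfl⟩
  simp only [sref, hw, Classical.epsilon_singleton]

theorem coeff0_eq [NeZero n] (a : Fin n → ℤ) : coeff0 a = a 0 := by
  rw [coeff0, dif_pos (NeZero.pos n)]
  rfl

@[simp] theorem mul_w (x y : Aff n) : (x * y).w = x.w * y.w := rfl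

@[simp] theorem mul_t (x y : Aff n) (i : Fin n) : (x * y).t i = x.t (y.w i) + y.t i := rfl

@[simp] theorem inv_w (x : Aff n) : x⁻¹.w = x.w⁻¹ := rfl

@[simp] theorem inv_t (x : Aff n) (i : Fin n) : x⁻¹.t i = -x.t (x.w⁻¹ i) := rfl

def ofPerm : Equiv.Perm (Fin n) →* Aff n where
  toFun σ := ⟨σ, 0⟩
  map_one' := rfl
  map_mul' σ τ := by ext <;> simp

def intervalRoot (p q : Fin n) : Fin n → ℤ := fun i => if p < i ∧ i ≤ q then 1 else 0

theorem finPart_intervalRoot {p q : Fin n} (hpq : p < q) :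
    finPart (intervalRoot p q) = Pi.single p 1 - Pi.single q 1 := by
  obtain ⟨m, rfl⟩ := Nat.exists_eq_add_one_of_ne_zero p.pos.ne'
  funext i
  simp only [finPart_apply, intervalRoot, Pi.sub_apply, Pi.single_apply, Fin.lt_def, Fin.le_def,
    Fin.ext_iff, coe_finRotate, Fin.val_last] at hpq ⊢
  have := q.isLt
  split_ifs <;> omega

theorem isPosRoot_intervalRoot (hn : 3 ≤ n) {p q : Fin n} (hpq : p < q) :
    IsPosRoot (intervalRoot p q) :=
  ⟨isRealRoot_of_finPart_eq hn hpq.ne (finPart_intervalRoot hpq),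
    fun i => by unfold intervalRoot; split_ifs <;> norm_num⟩

theorem sref_intervalRoot [NeZero n] {p q : Fin n} (hpq : p < q) :
    sref (intervalRoot p q) = ofPerm (Equiv.swap p q) := by
  rw [sref_eq hpq.ne (finPart_intervalRoot hpq), coeff0_eq]
  simp [intervalRoot, ofPerm]
  rfl

theorem apply_eq_of_finPart_eq [NeZero n] {b : Fin n → ℤ} {p q : Fin n} (h0 : b 0 = 0)
    (hf : finPart b = Pi.single p 1 - Pi.single q 1) (i : Fin n) :
    b i = (if p < i then 1 else 0) - if q < i then 1 else 0 := by
  obtain ⟨k, hk⟩ := i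
  induction k with
  | zero => simpa using h0
  | succ k ih =>
    have hc : finRotate n ⟨k, by omega⟩ = ⟨k + 1, hk⟩ := by
      ext
      rw [finRotate_apply, Fin.val_add_one_of_lt' (by simpa [Fin.lt_def] using hk)]
    have hstep := finPart_apply b ⟨k, by omega⟩
    rw [hc, hf, ih (by omega)] at hstep
    simp only [Pi.sub_apply, Pi.single_apply, Fin.ext_iff, Fin.lt_def] at hstep ⊢
    split_ifs at hstep ⊢ <;> omega

theorem eq_intervalRoot_of_apply_zero [NeZero n] (hn : 3 ≤ n) {b : Fin n → ℤ} (hb : IsPosRoot b)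
    (h0 : b 0 = 0) : ∃ p q, p < q ∧ b = intervalRoot p q := by
  obtain ⟨p, q, hpq, hf⟩ := hb.1.exists_finPart_eq hn
  have hb' := apply_eq_of_finPart_eq h0 hf
  have hlt : p < q := by
    refine lt_of_le_of_ne (not_lt.mp fun hqp => ?_) hpq
    have := hb.2 p
    rw [hb' p, if_neg (lt_irrefl p), if_pos hqp] at this
    omega
  refine ⟨p, q, hlt, funext fun i => ?_⟩
  rw [hb', intervalRoot]
  split_ifs <;> omega

/-- Symmetrised Iwahori–Matsumoto summand: it is antisymmetric in `p, q`, so that `2 ℓ(x)` is a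
sum over all ordered pairs (`two_mul_len`) and can be reindexed by any permutation of `Fin n`. -/
def lenSummand (x : Aff n) (p q : Fin n) : ℤ :=
  (if x.w q < x.w p then 1 else 0) - (if q < p then 1 else 0) + (x.t p - x.t q)

theorem lenSummand_swap (x : Aff n) (p q : Fin n) : lenSummand x q p = -lenSummand x p q := by
  have hw : p ≠ q → x.w p ≠ x.w q := fun h => x.w.injective.ne h
  unfold lenSummand
  rcases lt_trichotomy p q with h | rfl | h
  · have := hw h.ne
    split_ifs <;> omega
  · simp
  · have := hw h.ne'
    split_ifs <;> omega

theorem two_mul_len (x : Aff n) : 2 * len x = ∑ p, ∑ q, (lenSummand x p q).natAbs := by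
  have hlen : len x = ∑ p, ∑ q, if p < q then (lenSummand x p q).natAbs else 0 := by
    refine sum_congr rfl fun p _ => sum_congr rfl fun q _ => ?_
    by_cases h : p < q
    · rw [if_pos h, if_pos h, lenSummand, if_neg (not_lt_of_gt h), sub_zero]
    · rw [if_neg h, if_neg h]
  have hsplit : ∀ p q, (lenSummand x p q).natAbs
      = (if p < q then (lenSummand x p q).natAbs else 0)
        + if q < p then (lenSummand x q p).natAbs else 0 := by
    intro p q
    rcases lt_trichotomy p q with h | rfl | h
    · simp [h, not_lt_of_gt h]
    · simp [lenSummand]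
    · simp [h, not_lt_of_gt h, lenSummand_swap x q p]
  rw [sum_congr rfl fun p _ => sum_congr rfl fun q _ => hsplit p q]
  simp only [sum_add_distrib]
  rw [sum_comm (f := fun p q => if q < p then (lenSummand x q p).natAbs else 0), ← hlen]
  ring

theorem ite_finRotate_lt [NeZero n] (a b : Fin n) :
    (if finRotate n a < finRotate n b then 1 else 0 : ℤ)
      = (if a < b then 1 else 0) + (if a = -1 then 1 else 0) - (if b = -1 then 1 else 0) := by
  obtain ⟨m, rfl⟩ := Nat.exists_eq_add_one_of_ne_zero (NeZero.ne n)
  simp only [Fin.lt_def, coe_finRotate, Fin.ext_iff, Fin.coe_neg_one, Fin.val_last]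
  have := a.isLt
  have := b.isLt
  split_ifs <;> omega

/-- The element `π` generating the length-zero elements of the extended affine Weyl group. -/
def rotation [NeZero n] : Aff n := ⟨finRotate n, fun i => if i = -1 then 1 else 0⟩

def rotate [NeZero n] : MulAut (Aff n) := MulAut.conj rotation

theorem rotate_w [NeZero n] (x : Aff n) (p : Fin n) :
    (rotate x).w (finRotate n p) = finRotate n (x.w p) := by
  simp [rotate, rotation]

theorem rotate_t [NeZero n] (x : Aff n) (p : Fin n) :
    (rotate x).t (finRotate n p)
      = x.t p + (if x.w p = -1 then 1 else 0) - (if p = -1 then 1 else 0) := by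
  simp [rotate, rotation]
  ring

theorem len_rotate [NeZero n] (x : Aff n) : len (rotate x) = len x := by
  have h : ∀ p q, lenSummand (rotate x) (finRotate n p) (finRotate n q) = lenSummand x p q := by
    intro p q
    simp only [lenSummand, rotate_w, rotate_t, ite_finRotate_lt]
    ring
  have h2 : 2 * len (rotate x) = 2 * len x := by
    rw [two_mul_len, two_mul_len, ← Equiv.sum_comp (finRotate n)]
    simp only [← Equiv.sum_comp (finRotate n) (fun q => (lenSummand (rotate x) _ q).natAbs), h]
  omega

theorem finPart_comp {e : Equiv.Perm (Fin n)} (he : Commute e (finRotate n)) (a : Fin n → ℤ) :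
    finPart (a ∘ e) = finPart a ∘ e := by
  funext i
  rw [Function.comp_apply, finPart_apply, finPart_apply, Function.comp_apply, Function.comp_apply,
    ← Equiv.Perm.mul_apply, he.eq, Equiv.Perm.mul_apply]

theorem IsPosRoot.comp (hn : 3 ≤ n) {e : Equiv.Perm (Fin n)} (he : Commute e (finRotate n))
    {a : Fin n → ℤ} (ha : IsPosRoot a) : IsPosRoot (a ∘ e) := by
  refine ⟨?_, fun i => ha.2 (e i)⟩
  rw [IsRealRoot, pairing_self_eq_sum_sq hn, finPart_comp he, ← ha.1, pairing_self_eq_sum_sq hn]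
  exact Equiv.sum_comp e fun i => finPart a i ^ 2

theorem commute_finRotate_symm : Commute (finRotate n).symm (finRotate n) :=
  (Commute.refl (finRotate n)).inv_left

theorem ite_swap_apply_eq {ι : Type*} [DecidableEq ι] (p q z l : ι) :
    (if Equiv.swap p q z = l then 1 else 0 : ℤ) - (if z = l then 1 else 0)
      = -((Pi.single p 1 - Pi.single q 1 : ι → ℤ) l
          * (Pi.single p 1 - Pi.single q 1 : ι → ℤ) z) := by
  rw [Equiv.swap_apply_def]
  simp only [Pi.sub_apply, Pi.single_apply]
  split_ifs <;> grind

theorem rotate_sref [NeZero n] (hn : 3 ≤ n) {a : Fin n → ℤ} (ha : IsRealRoot a) :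
    rotate (sref a) = sref (a ∘ (finRotate n).symm) := by
  obtain ⟨p, q, hpq, hf⟩ := ha.exists_finPart_eq hn
  have hf' : finPart (a ∘ (finRotate n).symm)
      = Pi.single (finRotate n p) 1 - Pi.single (finRotate n q) 1 := by
    rw [finPart_comp commute_finRotate_symm, hf]
    funext i
    simp only [Function.comp_apply, Pi.sub_apply, Pi.single_apply, Equiv.symm_apply_eq]
  rw [sref_eq hpq hf, sref_eq ((finRotate n).injective.ne hpq) hf']
  ext i <;> obtain ⟨z, rfl⟩ := (finRotate n).surjective i
  · rw [rotate_w, Equiv.swap_apply_apply]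
    simp
  · have hlast : a 0 = a (-1) + finPart a (-1) := by rw [finPart_apply]; simp
    rw [rotate_t, finPart_comp commute_finRotate_symm, coeff0_eq, coeff0_eq, hlast]
    simp only [Function.comp_apply, Equiv.symm_apply_apply, finRotate_symm_apply, zero_sub]
    rw [hf]
    linear_combination ite_swap_apply_eq p q z (-1)

theorem bstep_rotate [NeZero n] (hn : 3 ≤ n) {u v : Aff n} (h : bstep u v) :
    bstep (rotate u) (rotate v) := by
  obtain ⟨⟨a, ha, rfl⟩, hlen⟩ := h
  refine ⟨⟨a ∘ (finRotate n).symm, ha.comp hn commute_finRotate_symm, ?_⟩, ?_⟩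
  · rw [map_mul, rotate_sref hn ha.1]
  · rwa [len_rotate, len_rotate]

theorem ble_rotate [NeZero n] (hn : 3 ≤ n) {u v : Aff n} (h : ble u v) :
    ble (rotate u) (rotate v) :=
  Relation.ReflTransGen.lift rotate (fun _ _ => bstep_rotate hn) _ _ h

theorem sum_eq_add_add_sum_compl {ι M : Type*} [Fintype ι] [DecidableEq ι] [AddCommMonoid M]
    {a b : ι} (hab : a ≠ b) (f : ι → M) : ∑ x, f x = f a + f b + ∑ x ∈ {a, b}ᶜ, f x := by
  rw [← sum_add_sum_compl {a, b}, sum_pair hab]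

theorem natAbs_lenSummand_ofPerm (σ : Equiv.Perm (Fin n)) (p q : Fin n) :
    (lenSummand (ofPerm σ) p q).natAbs = if (σ q < σ p ↔ q < p) then 0 else 1 := by
  simp only [lenSummand, ofPerm, MonoidHom.coe_mk, OneHom.coe_mk, Pi.zero_apply, sub_zero,
    add_zero]
  by_cases h₁ : σ q < σ p <;> by_cases h₂ : q < p <;> simp [h₁, h₂]

theorem len_ofPerm_lt_mul_swap {σ : Equiv.Perm (Fin n)} {a b : Fin n} (hab : a < b)
    (hσ : σ a < σ b) : len (ofPerm σ) < len (ofPerm (σ * Equiv.swap a b)) := by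
  set τ := Equiv.swap a b
  let A p q : ℕ := if (σ q < σ p ↔ q < p) then 0 else 1
  let B p q : ℕ := if (σ q < σ p ↔ τ q < τ p) then 0 else 1
  have hA : 2 * len (ofPerm σ) = ∑ p, ∑ q, A p q := by
    simp only [two_mul_len, natAbs_lenSummand_ofPerm, A]
  have hB : 2 * len (ofPerm (σ * τ)) = ∑ p, ∑ q, B p q := by
    rw [two_mul_len, ← Equiv.sum_comp τ]
    refine sum_congr rfl fun p _ => ?_
    rw [← Equiv.sum_comp τ]
    simp only [natAbs_lenSummand_ofPerm, Equiv.Perm.mul_apply, τ, Equiv.swap_apply_self, B]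
  have hne : ∀ {c}, c ∈ ({a, b}ᶜ : Finset (Fin n)) → c ≠ a ∧ c ≠ b := by simp
  have hτ : ∀ {c}, c ∈ ({a, b}ᶜ : Finset (Fin n)) → τ c = c := fun hc =>
    Equiv.swap_apply_of_ne_of_ne (hne hc).1 (hne hc).2
  have hrow : ∀ p ∈ ({a, b}ᶜ : Finset (Fin n)), ∑ q, A p q ≤ ∑ q, B p q := by
    intro p hp
    rw [sum_eq_add_add_sum_compl hab.ne, sum_eq_add_add_sum_compl hab.ne,
      sum_congr rfl fun q hq => show A p q = B p q by simp only [A, B, hτ hp, hτ hq]]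
    have := hne hp
    simp only [A, B, hτ hp, τ, Equiv.swap_apply_left, Equiv.swap_apply_right]
    split_ifs <;> omega
  have hcol : ∀ q ∈ ({a, b}ᶜ : Finset (Fin n)), A a q + A b q ≤ B a q + B b q := by
    intro q hq
    have := hne hq
    simp only [A, B, hτ hq, τ, Equiv.swap_apply_left, Equiv.swap_apply_right]
    split_ifs <;> omega
  have hcorner : A a a + A a b + (A b a + A b b) + 2 ≤ B a a + B a b + (B b a + B b b) := by
    simp only [A, B, τ, Equiv.swap_apply_left, Equiv.swap_apply_right]
    split_ifs <;> omega
  have hab_rows : ∑ q, A a q + ∑ q, A b q + 2 ≤ ∑ q, B a q + ∑ q, B b q := by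
    rw [← sum_add_distrib, ← sum_add_distrib, sum_eq_add_add_sum_compl hab.ne,
      sum_eq_add_add_sum_compl hab.ne (fun q => B a q + B b q)]
    have := sum_le_sum hcol
    omega
  have := sum_le_sum hrow
  rw [sum_eq_add_add_sum_compl hab.ne] at hA hB
  omega

theorem bstep_ofPerm_mul_swap (hn : 3 ≤ n) {σ : Equiv.Perm (Fin n)} {a b : Fin n} (hab : a < b)
    (hσ : σ a < σ b) : bstep (ofPerm σ) (ofPerm (σ * Equiv.swap a b)) := by
  have : NeZero n := ⟨a.pos.ne'⟩
  exact ⟨⟨intervalRoot a b, isPosRoot_intervalRoot hn hab, by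
    rw [sref_intervalRoot hab, map_mul]⟩, len_ofPerm_lt_mul_swap hab hσ⟩

def crossing (σ : Equiv.Perm (Fin n)) (i : Fin n) : ℕ := #{a | a < i ∧ i ≤ σ a}
theorem crossing_eq_sum (σ : Equiv.Perm (Fin n)) (i : Fin n) :
    crossing σ i = ∑ a, if a < i ∧ i ≤ σ a then 1 else 0 :=
  card_filter _ _

theorem crossing_eq_card_down (σ : Equiv.Perm (Fin n)) (i : Fin n) :
    crossing σ i = #{a | i ≤ a ∧ σ a < i} := by
  have key : ∀ a, (if a < i ∧ i ≤ σ a then 1 else 0 : ℤ) + (if σ a < i then 1 else 0)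
      = (if i ≤ a ∧ σ a < i then 1 else 0) + (if a < i then 1 else 0) := by
    intro a
    split_ifs <;> omega
  have hsum := sum_congr rfl fun a (_ : a ∈ univ) => key a
  rw [sum_add_distrib, sum_add_distrib, Equiv.sum_comp σ fun a => if a < i then (1 : ℤ) else 0,
    add_left_inj] at hsum
  rw [crossing, card_filter, card_filter]
  exact_mod_cast hsum

theorem crossing_one (i : Fin n) : crossing 1 i = 0 := by
  rw [crossing, card_eq_zero, filter_eq_empty_iff]
  rintro a - ⟨hai, hia⟩
  exact not_le.mpr hai hia

theorem crossing_mul_le (σ τ : Equiv.Perm (Fin n)) (i : Fin n) :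
    crossing (σ * τ) i ≤ crossing σ i + crossing τ i := by
  have key : ∀ a, (if a < i ∧ i ≤ σ (τ a) then 1 else 0)
      ≤ (if τ a < i ∧ i ≤ σ (τ a) then 1 else 0) + if a < i ∧ i ≤ τ a then 1 else 0 := by
    intro a
    split_ifs <;> omega
  calc crossing (σ * τ) i = ∑ a, if a < i ∧ i ≤ σ (τ a) then 1 else 0 := crossing_eq_sum _ _
    _ ≤ _ := sum_le_sum fun a _ => key a
    _ = crossing σ i + crossing τ i := by
      rw [sum_add_distrib, Equiv.sum_comp τ fun a => if a < i ∧ i ≤ σ a then 1 else 0,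
        crossing_eq_sum, crossing_eq_sum]

theorem crossing_swap {p q : Fin n} (hpq : p < q) (i : Fin n) :
    (crossing (Equiv.swap p q) i : ℤ) = intervalRoot p q i := by
  rw [crossing_eq_sum, sum_eq_single p]
  · simp [intervalRoot]
  · intro a _ hap
    rw [if_neg]
    rcases eq_or_ne a q with rfl | haq
    · rw [Equiv.swap_apply_right]
      omega
    · rw [Equiv.swap_apply_of_ne_of_ne hap haq]
      omega
  · simp

theorem crossing_mul_swap {σ : Equiv.Perm (Fin n)} {a b : Fin n} (hab : a < b) (hσ : σ a < σ b)
    (i : Fin n) :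
    crossing (σ * Equiv.swap a b) i
      = crossing σ i + if a < i ∧ i ≤ b ∧ σ a < i ∧ i ≤ σ b then 1 else 0 := by
  have hfix : ∀ x ∈ ({a, b}ᶜ : Finset (Fin n)), (σ * Equiv.swap a b) x = σ x := by
    intro x hx
    simp only [mem_compl, mem_insert, mem_singleton, not_or] at hx
    rw [Equiv.Perm.mul_apply, Equiv.swap_apply_of_ne_of_ne hx.1 hx.2]
  rw [crossing_eq_sum, crossing_eq_sum, sum_eq_add_add_sum_compl hab.ne,
    sum_eq_add_add_sum_compl hab.ne, sum_congr rfl fun x hx => by rw [hfix x hx],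
    Equiv.Perm.mul_apply, Equiv.Perm.mul_apply, Equiv.swap_apply_left, Equiv.swap_apply_right]
  split_ifs <;> omega

section Crossers

variable {σ : Equiv.Perm (Fin n)} {i x y : Fin n}

theorem crossing_pos_of_lt_of_le (hx : x < i) (hi : i ≤ σ x) : 0 < crossing σ i :=
  card_pos.mpr ⟨x, mem_filter.mpr ⟨mem_univ x, hx, hi⟩⟩

theorem crossing_pos_of_le_of_lt (hx : i ≤ x) (hi : σ x < i) : 0 < crossing σ i := by
  rw [crossing_eq_card_down]
  exact card_pos.mpr ⟨x, mem_filter.mpr ⟨mem_univ x, hx, hi⟩⟩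

theorem exists_lt_le_of_crossing_pos (h : 0 < crossing σ i) : ∃ x, x < i ∧ i ≤ σ x := by
  obtain ⟨x, hx⟩ := card_pos.mp h
  exact ⟨x, (mem_filter.mp hx).2⟩

theorem exists_le_lt_of_crossing_pos (h : 0 < crossing σ i) : ∃ x, i ≤ x ∧ σ x < i := by
  rw [crossing_eq_card_down] at h
  obtain ⟨x, hx⟩ := card_pos.mp h
  exact ⟨x, (mem_filter.mp hx).2⟩

theorem eq_of_lt_le_of_lt_le (h : crossing σ i ≤ 1) (hx : x < i ∧ i ≤ σ x)
    (hy : y < i ∧ i ≤ σ y) : x = y :=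
  card_le_one.mp h x (mem_filter.mpr ⟨mem_univ x, hx⟩) y (mem_filter.mpr ⟨mem_univ y, hy⟩)

theorem eq_of_le_lt_of_le_lt (h : crossing σ i ≤ 1) (hx : i ≤ x ∧ σ x < i)
    (hy : i ≤ y ∧ σ y < i) : x = y := by
  rw [crossing_eq_card_down] at h
  exact card_le_one.mp h x (mem_filter.mpr ⟨mem_univ x, hx⟩) y (mem_filter.mpr ⟨mem_univ y, hy⟩)

end Crossers

section BelowTransposition

variable {σ : Equiv.Perm (Fin n)} {P Q : Fin n}

theorem crossing_le_one (hσ : ∀ i, (crossing σ i : ℤ) ≤ intervalRoot P Q i) (i : Fin n) :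
    crossing σ i ≤ 1 := by
  have := hσ i
  unfold intervalRoot at this
  split_ifs at this <;> omega

theorem mem_of_crossing_pos (hσ : ∀ i, (crossing σ i : ℤ) ≤ intervalRoot P Q i) {i : Fin n}
    (h : 0 < crossing σ i) : P < i ∧ i ≤ Q := by
  have := hσ i
  unfold intervalRoot at this
  split_ifs at this with hi
  · exact hi
  · omega

theorem le_and_apply_le_of_lt_apply (hσ : ∀ i, (crossing σ i : ℤ) ≤ intervalRoot P Q i)
    {x : Fin n} (hx : x < σ x) : P ≤ x ∧ σ x ≤ Q := by
  refine ⟨not_lt.mp fun hxP => ?_, (mem_of_crossing_pos hσ (crossing_pos_of_lt_of_le hx le_rfl)).2⟩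
  have := mem_of_crossing_pos hσ
    (crossing_pos_of_lt_of_le (lt_min hxP hx) (min_le_right P (σ x)))
  exact (min_le_left P (σ x)).not_gt this.1

theorem le_apply_and_le_of_apply_lt (hσ : ∀ i, (crossing σ i : ℤ) ≤ intervalRoot P Q i)
    {x : Fin n} (hx : σ x < x) : P ≤ σ x ∧ x ≤ Q := by
  refine ⟨not_lt.mp fun hxP => ?_, (mem_of_crossing_pos hσ (crossing_pos_of_le_of_lt le_rfl hx)).2⟩
  have := mem_of_crossing_pos hσ
    (crossing_pos_of_le_of_lt (min_le_right P x) (lt_min hxP hx))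
  exact (min_le_left P x).not_gt this.1

theorem exists_ascent_of_crossing_eq_zero (hσ : ∀ i, (crossing σ i : ℤ) ≤ intervalRoot P Q i)
    {i : Fin n} (hPi : P < i) (hiQ : i ≤ Q) (h0 : crossing σ i = 0) :
    ∃ a b, a < b ∧ σ a < σ b ∧ ∀ k, (crossing (σ * Equiv.swap a b) k : ℤ) ≤ intervalRoot P Q k := by
  set j : Fin n := ⟨i.val - 1, by omega⟩
  have hji : j < i := by simp only [Fin.lt_def, j]; omega
  have hj : σ j < i := not_le.mp fun h => (crossing_pos_of_lt_of_le hji h).ne' h0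
  have hi : i ≤ σ i := not_lt.mp fun h => (crossing_pos_of_le_of_lt le_rfl h).ne' h0
  refine ⟨j, i, hji, hj.trans_le hi, fun k => ?_⟩
  rw [crossing_mul_swap hji (hj.trans_le hi)]
  split_ifs with hk
  · obtain rfl : k = i := by simp only [Fin.lt_def, Fin.le_def, j] at hk ⊢; omega
    simp [h0, intervalRoot, hPi, hiQ]
  · simpa using hσ k

theorem apply_left_eq_or_exists_ascent (hσ : ∀ i, (crossing σ i : ℤ) ≤ intervalRoot P Q i)
    (hPQ : P < Q) (hpos : ∀ i, P < i → i ≤ Q → 0 < crossing σ i) :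
    σ P = Q ∨ ∃ a b, a < b ∧ σ a < σ b ∧ b ≤ σ a := by
  obtain ⟨x, hxQ, hQx⟩ := exists_lt_le_of_crossing_pos (hpos Q hPQ le_rfl)
  have hx := le_and_apply_le_of_lt_apply hσ (hxQ.trans_le hQx)
  have hσx : σ x = Q := le_antisymm hx.2 hQx
  rcases hx.1.eq_or_lt with rfl | hPx
  · exact Or.inl hσx
  obtain ⟨y, hyx, hxy⟩ := exists_lt_le_of_crossing_pos (hpos x hPx hxQ.le)
  have hy := le_and_apply_le_of_lt_apply hσ (hyx.trans_le hxy)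
  have hyQ : σ y ≠ Q := fun h => hyx.ne (σ.injective (h.trans hσx.symm))
  exact Or.inr ⟨y, x, hyx, hσx ▸ lt_of_le_of_ne hy.2 hyQ, hxy⟩

theorem apply_right_eq_or_exists_ascent (hσ : ∀ i, (crossing σ i : ℤ) ≤ intervalRoot P Q i)
    (hPQ : P < Q) (hpos : ∀ i, P < i → i ≤ Q → 0 < crossing σ i) :
    σ Q = P ∨ ∃ a b, a < b ∧ σ a < σ b ∧ σ b ≤ a := by
  obtain ⟨z, hQz, hzQ⟩ := exists_le_lt_of_crossing_pos (hpos Q hPQ le_rfl)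
  have hz := le_apply_and_le_of_apply_lt hσ (hzQ.trans_le hQz)
  obtain rfl : z = Q := le_antisymm hz.2 hQz
  rcases hz.1.eq_or_lt with h | hPw
  · exact Or.inl h.symm
  obtain ⟨y, hwy, hyw⟩ := exists_le_lt_of_crossing_pos (hpos (σ z) hPw hzQ.le)
  have hy := le_apply_and_le_of_apply_lt hσ (hyw.trans_le hwy)
  have hyz : y ≠ z := by rintro rfl; exact lt_irrefl _ hyw
  exact Or.inr ⟨y, z, lt_of_le_of_ne hy.2 hyz, hyw, hwy⟩

theorem eq_swap_of_apply_eq (hσ : ∀ i, (crossing σ i : ℤ) ≤ intervalRoot P Q i)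
    (hP : σ P = Q) (hQ : σ Q = P) : σ = Equiv.swap P Q := by
  ext1 z
  rcases eq_or_ne z P with rfl | hzP
  · rw [hP, Equiv.swap_apply_left]
  rcases eq_or_ne z Q with rfl | hzQ
  · rw [hQ, Equiv.swap_apply_right]
  rw [Equiv.swap_apply_of_ne_of_ne hzP hzQ]
  rcases lt_trichotomy (σ z) z with h | h | h
  · have hz := le_apply_and_le_of_apply_lt hσ h
    exact absurd (eq_of_le_lt_of_le_lt (crossing_le_one hσ z) ⟨le_rfl, h⟩
      ⟨hz.2, hQ ▸ hz.1.trans_lt h⟩) hzQ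
  · exact h
  · have hz := le_and_apply_le_of_lt_apply hσ h
    exact absurd (eq_of_lt_le_of_lt_le (crossing_le_one hσ (σ z)) ⟨h, le_rfl⟩
      ⟨hz.1.trans_lt h, hP ▸ hz.2⟩) hzP

theorem exists_ascent (hσ : ∀ i, (crossing σ i : ℤ) ≤ intervalRoot P Q i) (hPQ : P < Q)
    (hne : σ ≠ Equiv.swap P Q) :
    ∃ a b, a < b ∧ σ a < σ b ∧ ∀ k, (crossing (σ * Equiv.swap a b) k : ℤ) ≤ intervalRoot P Q k := by
  by_cases hpos : ∀ i, P < i → i ≤ Q → 0 < crossing σ i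
  swap
  · simp only [not_forall, not_lt, Nat.le_zero] at hpos
    obtain ⟨i, hPi, hiQ, h0⟩ := hpos
    exact exists_ascent_of_crossing_eq_zero hσ hPi hiQ h0
  obtain ⟨a, b, hab, hσab, hdisj⟩ : ∃ a b, a < b ∧ σ a < σ b ∧ (b ≤ σ a ∨ σ b ≤ a) := by
    rcases apply_left_eq_or_exists_ascent hσ hPQ hpos with hP | ⟨a, b, h1, h2, h3⟩
    · rcases apply_right_eq_or_exists_ascent hσ hPQ hpos with hQ | ⟨a, b, h1, h2, h3⟩
      · exact absurd (eq_swap_of_apply_eq hσ hP hQ) hne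
      · exact ⟨a, b, h1, h2, Or.inr h3⟩
    · exact ⟨a, b, h1, h2, Or.inl h3⟩
  refine ⟨a, b, hab, hσab, fun k => ?_⟩
  -- `hdisj` says that no cut lies between both `a, b` and `σ a, σ b`.
  rw [crossing_mul_swap hab hσab, if_neg (by omega)]
  simpa using hσ k

theorem wellFounded_len_ofPerm_gt :
    WellFounded fun σ τ : Equiv.Perm (Fin n) => len (ofPerm τ) < len (ofPerm σ) := by
  have : IsTrans _ fun σ τ : Equiv.Perm (Fin n) => len (ofPerm τ) < len (ofPerm σ) :=
    ⟨fun _ _ _ h₁ h₂ => h₂.trans h₁⟩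
  have : Std.Irrefl fun σ τ : Equiv.Perm (Fin n) => len (ofPerm τ) < len (ofPerm σ) :=
    ⟨fun _ => lt_irrefl _⟩
  exact Finite.wellFounded_of_trans_of_irrefl _

theorem ble_ofPerm_swap (hn : 3 ≤ n) (hPQ : P < Q)
    (hσ : ∀ i, (crossing σ i : ℤ) ≤ intervalRoot P Q i) :
    ble (ofPerm σ) (ofPerm (Equiv.swap P Q)) := by
  induction σ using wellFounded_len_ofPerm_gt.induction with
  | _ σ ih =>
    rcases eq_or_ne σ (Equiv.swap P Q) with rfl | hne
    · exact Relation.ReflTransGen.refl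
    obtain ⟨a, b, hab, hσab, hσ'⟩ := exists_ascent hσ hPQ hne
    exact Relation.ReflTransGen.head (bstep_ofPerm_mul_swap hn hab hσab)
      (ih _ (len_ofPerm_lt_mul_swap hab hσab) hσ')

end BelowTransposition

theorem exists_prod_sref_eq_ofPerm [NeZero n] (hn : 3 ≤ n) (l : List (Fin n → ℤ))
    (hl : ∀ b ∈ l, IsPosRoot b ∧ b 0 = 0) :
    ∃ σ, (l.map sref).prod = ofPerm σ ∧ ∀ i, (crossing σ i : ℤ) ≤ l.sum i := by
  induction l with
  | nil => exact ⟨1, (map_one ofPerm).symm, fun i => by simp [crossing_one]⟩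
  | cons b l ih =>
    obtain ⟨σ, hσ, hcr⟩ := ih fun c hc => hl c (List.mem_cons_of_mem b hc)
    obtain ⟨p, q, hpq, rfl⟩ := eq_intervalRoot_of_apply_zero hn (hl _ List.mem_cons_self).1
      (hl _ List.mem_cons_self).2
    refine ⟨Equiv.swap p q * σ, ?_, fun i => ?_⟩
    · rw [List.map_cons, List.prod_cons, hσ, sref_intervalRoot hpq, map_mul]
    · have := crossing_mul_le (Equiv.swap p q) σ i
      have := crossing_swap hpq i
      have := hcr i
      simp only [List.sum_cons, Pi.add_apply]
      omega

theorem ble_prod_sref_of_apply_zero [NeZero n] (hn : 3 ≤ n) {β : Fin n → ℤ} (hβ : IsPosRoot β)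
    (h0 : β 0 = 0) {l : List (Fin n → ℤ)} (hl : ∀ b ∈ l, IsPosRoot b) (hsum : l.sum ≤ β) :
    ble (l.map sref).prod (sref β) := by
  have hl0 : ∀ b ∈ l, IsPosRoot b ∧ b 0 = 0 := by
    intro b hb
    have hle : b ≤ β := (List.single_le_sum (fun c hc i => (hl c hc).2 i) b hb).trans hsum
    exact ⟨hl b hb, le_antisymm (h0 ▸ hle 0) ((hl b hb).2 0)⟩
  obtain ⟨P, Q, hPQ, rfl⟩ := eq_intervalRoot_of_apply_zero hn hβ h0
  obtain ⟨σ, hσ, hcr⟩ := exists_prod_sref_eq_ofPerm hn l hl0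
  rw [hσ, sref_intervalRoot hPQ]
  exact ble_ofPerm_swap hn hPQ fun i => (hcr i).trans (hsum i)

theorem ble_prod_sref_of_apply_iterate_eq_zero [NeZero n] (hn : 3 ≤ n) (k : ℕ)
    {β : Fin n → ℤ} (hβ : IsPosRoot β) (h0 : β ((finRotate n)^[k] 0) = 0)
    {l : List (Fin n → ℤ)} (hl : ∀ b ∈ l, IsPosRoot b) (hsum : l.sum ≤ β) :
    ble (l.map sref).prod (sref β) := by
  induction k generalizing β l with
  | zero => exact ble_prod_sref_of_apply_zero hn hβ h0 hl hsum
  | succ k ih =>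
    have hrot : ∀ b, IsPosRoot b → rotate (sref (b ∘ finRotate n)) = sref b := fun b hb => by
      rw [rotate_sref hn (hb.comp hn (Commute.refl _)).1, Function.comp_assoc,
        Equiv.self_comp_symm, Function.comp_id]
    have h := ih (β := β ∘ finRotate n) (l := l.map (· ∘ finRotate n))
      (hβ.comp hn (Commute.refl _))
      (by rwa [Function.comp_apply, ← Function.iterate_succ_apply' (finRotate n)])
      (by simpa using fun b hb => (hl b hb).comp hn (Commute.refl _))
      (fun i => by simpa [Pi.list_sum_apply, Function.comp_def] using hsum (finRotate n i))
    convert ble_rotate hn h using 1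
    · rw [map_list_prod, List.map_map, List.map_map]
      exact congrArg List.prod (List.map_congr_left fun b hb => (hrot b (hl b hb)).symm)
    · exact (hrot β hβ).symm

end AffA.Aff

open AffA Aff in
/-- if `Σ β_i ≤ β < c` then `s_{β_1} s_{β_2} ⋯ s_{β_r} ≤ s_β` in
Bruhat order. -/
theorem prod_refl_le (n : ℕ) (hn : 3 ≤ n) (β : Fin n → ℤ) (hβ : IsPosRoot β)
    (hβc : β < cvec n) (l : List (Fin n → ℤ)) (hl : ∀ b ∈ l, IsPosRoot b)
    (hsum : l.sum ≤ β) :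
    ble ((l.map sref).prod) (sref β) := by
  have : NeZero n := ⟨by omega⟩
  obtain ⟨i, hi⟩ : ∃ i, β i < 1 := (Pi.lt_def.mp hβc).2
  have h0 : β ((finRotate n)^[i.val] 0) = 0 := by
    rw [← finCycle_eq_finRotate_iterate, finCycle_apply, zero_add]
    exact le_antisymm (Int.lt_add_one_iff.mp hi) (hβ.2 i)
  exact ble_prod_sref_of_apply_iterate_eq_zero hn i.val hβ h0 hl hsum
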